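/- arXiv:1207.2071 — 5 statements merged into one kernel-verified Lean document; each statement's English description precedes it below -/
import Mathlib

section
/- Let n be a nonnegative integer and let A be the (n+1)×(n+1) matrix over Q with entries a_{ij} = (-1)^j * C(n-j, i) for 0 ≤ i, j ≤ n. Then the square A^2 has entries b_{ij} = (-1)^j * C(j, n-i). -/
open Polynomial Finset

lemma key (m j i : ℕ) :
    ∑ k ∈ Finset.range (m+1), (-1:ℚ)^k * (m.choose k) * ((m + j - k).choose i)
      = if m ≤ i then (j.choose (i - m) : ℚ) else 0 := by
  have h1 : (X : ℚ[X])^m * (X+1)^j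
      = ∑ k ∈ Finset.range (m+1),
          (((-1:ℚ)^(m-k) * (m.choose k)) • (X+1)^(k+j)) := by
    have := add_pow (X + 1 : ℚ[X]) (-1) m
    have hx : (X + 1 + (-1) : ℚ[X]) = X := by ring
    rw [hx] at this
    rw [this, Finset.sum_mul]
    apply Finset.sum_congr rfl
    intro k hk
    simp [Algebra.smul_def, algebraMap_eq, mul_comm, pow_add]
    ring
  have h2 := congrArg (fun p => Polynomial.coeff p i) h1
  simp only [Polynomial.finset_sum_coeff, Polynomial.coeff_smul, smul_eq_mul,
    Polynomial.coeff_X_add_one_pow] at h2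
  rw [Polynomial.coeff_X_pow_mul'] at h2
  rw [Polynomial.coeff_X_add_one_pow] at h2
  -- h2 : (if m ≤ i then (j.choose (i-m):ℚ) else 0) = ∑ k in range (m+1), (-1)^(m-k)*C(m,k)*C(k+j,i)
  rw [h2]
  -- reindex k ↦ m - k
  rw [← Finset.sum_range_reflect
    (fun k => (-1:ℚ)^(m-k) * (m.choose k) * (((k+j)).choose i)) (m+1)]
  apply Finset.sum_congr rfl
  intro k hk
  simp only [Finset.mem_range] at hk
  have hk' : k ≤ m := Nat.lt_succ_iff.mp hk
  have e1 : m + 1 - 1 - k = m - k := by omega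
  have e2 : m - (m - k) = k := by omega
  have e3 : m - k + j = m + j - k := by omega
  rw [e1, e2, e3, Nat.choose_symm hk']

/-- **The square of the matrix `A`.**
Let `A` be the `(n+1) × (n+1)` matrix over `ℚ` with entries
`a_{ij} = (-1)^j * C(n-j, i)` for `0 ≤ i, j ≤ n` (where `C(m,k)` is the usual binomial
coefficient, zero when `k > m`).  Then the square `A^2` has entries
`b_{ij} = (-1)^j * C(j, n-i)`. -/
theorem matrixA_sq (n : ℕ)
    (A : Matrix (Fin (n + 1)) (Fin (n + 1)) ℚ)
    (hA : ∀ i j : Fin (n + 1), A i j = (-1 : ℚ) ^ (j : ℕ) * ((n - (j : ℕ)).choose (i : ℕ))) :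
    ∀ i j : Fin (n + 1), (A * A) i j = (-1 : ℚ) ^ (j : ℕ) * ((j : ℕ).choose (n - (i : ℕ))) := by
  intro i j
  set m := n - (j : ℕ) with hm
  have hj : (j : ℕ) ≤ n := Nat.lt_succ_iff.mp j.isLt
  have hi : (i : ℕ) ≤ n := Nat.lt_succ_iff.mp i.isLt
  have hmj : m + (j : ℕ) = n := by omega
  have hsum : (A * A) i j
      = ∑ k ∈ Finset.range (n + 1),
          (-1 : ℚ) ^ (j : ℕ) * ((-1:ℚ)^k * (m.choose k) * ((m + (j:ℕ) - k).choose (i:ℕ))) := by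
    rw [Matrix.mul_apply]
    rw [show (∑ k : Fin (n+1), A i k * A k j)
        = ∑ k : Fin (n+1), ((fun k : ℕ =>
            (-1 : ℚ) ^ (j : ℕ) * ((-1:ℚ)^k * (m.choose k) * ((m + (j:ℕ) - k).choose (i:ℕ)))) (k : ℕ))
      from Finset.sum_congr rfl (fun k _ => by
        simp only
        rw [hA, hA, hmj]
        ring)]
    exact Fin.sum_univ_eq_sum_range (fun k : ℕ =>
      (-1 : ℚ) ^ (j : ℕ) * ((-1:ℚ)^k * (m.choose k) * ((m + (j:ℕ) - k).choose (i:ℕ)))) (n+1)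
  rw [hsum, ← Finset.mul_sum]
  have hsub : Finset.range (m + 1) ⊆ Finset.range (n + 1) := by
    apply Finset.range_subset_range.mpr; omega
  rw [← Finset.sum_subset hsub (by
    intro k hk1 hk2
    simp only [Finset.mem_range] at hk1 hk2
    have : m < k := by omega
    rw [Nat.choose_eq_zero_of_lt this]
    simp)]
  rw [key m (j : ℕ) (i : ℕ)]
  by_cases h : m ≤ (i : ℕ)
  · rw [if_pos h]
    have h1 : (i:ℕ) - m ≤ (j:ℕ) := by omega
    have h2 : (j:ℕ) - ((i:ℕ) - m) = n - (i:ℕ) := by omega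
    rw [← Nat.choose_symm h1, h2]
  · rw [if_neg h]
    have : (j:ℕ) < n - (i:ℕ) := by omega
    rw [Nat.choose_eq_zero_of_lt this]
    simp
end

section
/- Let n be a nonnegative integer and let A be the (n+1)×(n+1) matrix over Q with entries a_{ij} = (-1)^j * C(n-j, i) for 0 ≤ i, j ≤ n. Then A^3 = (-1)^n times the identity matrix. -/
/-! Column `j` of the matrix lists the coefficients of `(-1)^j (X + 1)^(n - j)`, so the sums in
its matrix products are coefficients of polynomials given by the binomial theorem. Expanding
`X^m (X + 1)^(n - m) = (-1 + (X + 1))^m (X + 1)^(n - m)` shows that `A^2` has entries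
`(-1)^k C(k, n - i)`, and expanding `(-X)^m = (1 - (X + 1))^m` (binomial inversion) then
turns `A^2 * A` into `(-1)^n` times the identity. -/

open Finset Polynomial

namespace Polynomial

variable {R : Type*} [CommRing R]

theorem sum_neg_one_pow_choose_smul_X_add_one_pow_sub {m n : ℕ} (h : m ≤ n) :
    ∑ j ∈ range (m + 1), ((-1) ^ j * m.choose j : R) • (X + 1 : R[X]) ^ (n - j) =
      X ^ m * (X + 1) ^ (n - m) := by
  calc ∑ j ∈ range (m + 1), ((-1) ^ j * m.choose j : R) • (X + 1 : R[X]) ^ (n - j)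
      = (-1 + (X + 1)) ^ m * (X + 1) ^ (n - m) := by
        rw [add_pow, sum_mul]
        refine sum_congr rfl fun j hj => ?_
        have hjm : j ≤ m := mem_range_succ_iff.mp hj
        rw [show n - j = (m - j) + (n - m) by omega, pow_add, smul_eq_C_mul]
        simp only [map_mul, map_pow, map_neg, map_one, map_natCast]
        ring
    _ = X ^ m * (X + 1) ^ (n - m) := by ring

theorem sum_neg_one_pow_choose_smul_X_add_one_pow (m : ℕ) :
    ∑ k ∈ range (m + 1), ((-1) ^ k * m.choose k : R) • (X + 1 : R[X]) ^ k =
      ((-1) ^ m : R) • X ^ m := by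
  calc ∑ k ∈ range (m + 1), ((-1) ^ k * m.choose k : R) • (X + 1 : R[X]) ^ k
      = (-(X + 1) + 1) ^ m := by
        rw [add_pow]
        refine sum_congr rfl fun k _ => ?_
        rw [smul_eq_C_mul, neg_pow (X + 1 : R[X])]
        simp only [map_mul, map_pow, map_neg, map_one, map_natCast]
        ring
    _ = ((-1) ^ m : R) • X ^ m := by
        rw [smul_eq_C_mul]
        simp only [map_pow, map_neg, map_one]
        ring

end Polynomial

variable {R : Type*} [CommRing R]

theorem sum_neg_one_pow_mul_choose_mul_choose_sub {m n i : ℕ} (hm : m ≤ n) (hi : i ≤ n) :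
    ∑ j ∈ range (m + 1), ((-1) ^ j * m.choose j * (n - j).choose i : R) =
      (n - m).choose (n - i) := by
  have := congrArg (coeff · i) (sum_neg_one_pow_choose_smul_X_add_one_pow_sub (R := R) hm)
  simp only [finsetSum_coeff, coeff_smul, coeff_X_add_one_pow, coeff_X_pow_mul', smul_eq_mul] at this
  rw [this]
  split_ifs with hmi
  · exact congrArg _ (Nat.choose_symm_of_eq_add (by omega))
  · rw [Nat.choose_eq_zero_of_lt (by omega), Nat.cast_zero]

theorem sum_neg_one_pow_mul_choose_mul_choose (m r : ℕ) :
    ∑ k ∈ range (m + 1), ((-1) ^ k * m.choose k * k.choose r : R) =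
      if r = m then (-1) ^ m else 0 := by
  have := congrArg (coeff · r) (sum_neg_one_pow_choose_smul_X_add_one_pow (R := R) m)
  simpa only [finsetSum_coeff, coeff_smul, coeff_X_add_one_pow, smul_eq_mul, coeff_X_pow,
    mul_ite, mul_one, mul_zero] using this

theorem sum_range_mul_choose_mul_of_lt {m N : ℕ} (h : m < N) (f g : ℕ → R) :
    ∑ j ∈ range N, f j * m.choose j * g j = ∑ j ∈ range (m + 1), f j * m.choose j * g j := by
  refine (sum_subset (range_subset_range.2 h) fun j _ hj => ?_).symm
  rw [Nat.choose_eq_zero_of_lt (by simpa using hj), Nat.cast_zero, mul_zero, zero_mul]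

variable (R) in
def signedChooseMatrix (n : ℕ) : Matrix (Fin (n + 1)) (Fin (n + 1)) R :=
  Matrix.of fun i j => (-1) ^ (j : ℕ) * ((n - j).choose i : R)

namespace signedChooseMatrix

variable (n : ℕ)

theorem mul_self_apply (i k : Fin (n + 1)) :
    (signedChooseMatrix R n * signedChooseMatrix R n) i k =
      (-1) ^ (k : ℕ) * ((k : ℕ).choose (n - i) : R) := by
  have hk : n - k < n + 1 := by omega
  calc (signedChooseMatrix R n * signedChooseMatrix R n) i k
      = (-1) ^ (k : ℕ) *
          ∑ j ∈ range (n + 1), ((-1) ^ j * (n - k).choose j * (n - j).choose i : R) := by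
        rw [Matrix.mul_apply, mul_sum, ← Fin.sum_univ_eq_sum_range
          (fun j => (-1) ^ (k : ℕ) * ((-1) ^ j * (n - k).choose j * (n - j).choose (i : ℕ) : R))]
        refine sum_congr rfl fun j _ => ?_
        simp only [signedChooseMatrix, Matrix.of_apply]
        ring
    _ = (-1) ^ (k : ℕ) * ((k : ℕ).choose (n - i) : R) := by
        rw [sum_range_mul_choose_mul_of_lt hk, sum_neg_one_pow_mul_choose_mul_choose_sub
          (Nat.sub_le n k) i.is_le, Nat.sub_sub_self k.is_le]

theorem pow_three :
    signedChooseMatrix R n ^ 3 = (-1 : R) ^ n • (1 : Matrix (Fin (n + 1)) (Fin (n + 1)) R) := by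
  ext i l
  have hl : n - l < n + 1 := by omega
  calc (signedChooseMatrix R n ^ 3) i l
      = (-1) ^ (l : ℕ) *
          ∑ k ∈ range (n + 1), ((-1) ^ k * (n - l).choose k * k.choose (n - i) : R) := by
        rw [pow_succ, pow_two, Matrix.mul_apply, mul_sum, ← Fin.sum_univ_eq_sum_range
          (fun k => (-1) ^ (l : ℕ) * ((-1) ^ k * (n - l).choose k * k.choose (n - i) : R))]
        refine sum_congr rfl fun k _ => ?_
        rw [mul_self_apply]
        simp only [signedChooseMatrix, Matrix.of_apply]
        ring
    _ = ((-1 : R) ^ n • (1 : Matrix (Fin (n + 1)) (Fin (n + 1)) R)) i l := by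
        rw [sum_range_mul_choose_mul_of_lt hl, sum_neg_one_pow_mul_choose_mul_choose,
          Matrix.smul_apply, Matrix.one_apply]
        by_cases hil : i = l
        · rw [if_pos (by rw [hil]), if_pos hil, smul_eq_mul, mul_one,
            pow_mul_pow_sub _ l.is_le]
        · rw [if_neg (by omega), if_neg hil, smul_zero, mul_zero]

end signedChooseMatrix

/-- **`A^3 = (-1)^n · I`.**
Let `A` be the `(n+1) × (n+1)` matrix over `ℚ` with entries
`a_{ij} = (-1)^j * C(n-j, i)` for `0 ≤ i, j ≤ n` (where `C(m,k)` is the usual binomial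
coefficient, zero when `k > m`).  Then `A^3 = (-1)^n` times the identity matrix. -/
theorem matrixA_cube (n : ℕ)
    (A : Matrix (Fin (n + 1)) (Fin (n + 1)) ℚ)
    (hA : ∀ i j : Fin (n + 1), A i j = (-1 : ℚ) ^ (j : ℕ) * ((n - (j : ℕ)).choose (i : ℕ))) :
    A ^ 3 = ((-1 : ℚ) ^ n) • (1 : Matrix (Fin (n + 1)) (Fin (n + 1)) ℚ) := by
  obtain rfl : A = signedChooseMatrix ℚ n := Matrix.ext hA
  exact signedChooseMatrix.pow_three n
end

section
/- Let n be a nonnegative integer and A the (n+1)×(n+1) matrix over Q with entries a_{ij} = (-1)^j * C(n-j, i). Then A is invertible, with inverse (-1)^n * A^2. -/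
open Polynomial Finset

private lemma lem0 (m : ℕ) :
    ∑ t ∈ Finset.range (m + 1),
      Polynomial.C ((-1 : ℚ) ^ t * (m.choose t : ℚ)) * (X + 1) ^ (m - t) = X ^ m := by
  have h := add_pow (-1 : ℚ[X]) (X + 1) m
  have hx : (-1 : ℚ[X]) + (X + 1) = X := by ring
  rw [hx] at h
  rw [h]
  refine Finset.sum_congr rfl fun t _ => ?_
  simp only [map_mul, map_pow, map_neg, map_one, map_natCast]
  ring

private lemma lem0' (m : ℕ) :
    ∑ k ∈ Finset.range (m + 1),
      Polynomial.C ((-1 : ℚ) ^ (m - k) * (m.choose k : ℚ)) * (X + 1) ^ k = X ^ m := by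
  have h := add_pow (X + 1 : ℚ[X]) (-1) m
  have hx : (X + 1 : ℚ[X]) + -1 = X := by ring
  rw [hx] at h
  rw [h]
  refine Finset.sum_congr rfl fun t _ => ?_
  simp only [map_mul, map_pow, map_neg, map_one, map_natCast]
  ring

private lemma lem1 (n m : ℕ) (h : m ≤ n) :
    ∑ l ∈ Finset.range (n + 1),
      Polynomial.C ((-1 : ℚ) ^ l * (m.choose l : ℚ)) * (X + 1) ^ (n - l)
      = X ^ m * (X + 1) ^ (n - m) := by
  rw [← Finset.sum_subset (Finset.range_subset_range.2 (by omega) :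
        Finset.range (m + 1) ⊆ Finset.range (n + 1))]
  · have hc : ∀ l ∈ Finset.range (m + 1),
        Polynomial.C ((-1 : ℚ) ^ l * (m.choose l : ℚ)) * (X + 1) ^ (n - l)
        = (Polynomial.C ((-1 : ℚ) ^ l * (m.choose l : ℚ)) * (X + 1) ^ (m - l))
            * (X + 1) ^ (n - m) := by
      intro l hl
      rw [Finset.mem_range] at hl
      rw [mul_assoc, ← pow_add]
      congr 2
      omega
    rw [Finset.sum_congr rfl hc, ← Finset.sum_mul, lem0]
  · intro l _ hl
    rw [Finset.mem_range, not_lt] at hl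
    rw [Nat.choose_eq_zero_of_lt (by omega)]
    simp

private lemma lem3 (n m : ℕ) (h : m ≤ n) :
    ∑ k ∈ Finset.range (n + 1),
      Polynomial.C ((-1 : ℚ) ^ k * (((X + 1 : ℚ[X]) ^ m * X ^ (n - m)).coeff k))
        * (X + 1) ^ (n - k)
      = Polynomial.C ((-1 : ℚ) ^ (n - m)) * X ^ m := by
  rw [← Finset.sum_range_reflect]
  have hcoeff : ∀ k, ((X + 1 : ℚ[X]) ^ m * X ^ (n - m)).coeff k
      = if n - m ≤ k then ((X + 1 : ℚ[X]) ^ m).coeff (k - (n - m)) else 0 :=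
    fun k => Polynomial.coeff_mul_X_pow' _ _ _
  rw [← Finset.sum_subset (Finset.range_subset_range.2 (by omega) :
        Finset.range (m + 1) ⊆ Finset.range (n + 1))]
  · have key : ∀ k ∈ Finset.range (m + 1),
        Polynomial.C ((-1 : ℚ) ^ (n + 1 - 1 - k) *
            (((X + 1 : ℚ[X]) ^ m * X ^ (n - m)).coeff (n + 1 - 1 - k)))
          * (X + 1) ^ (n - (n + 1 - 1 - k))
        = Polynomial.C ((-1 : ℚ) ^ (n - m)) *
            (Polynomial.C ((-1 : ℚ) ^ (m - k) * (m.choose k : ℚ)) * (X + 1) ^ k) := by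
      intro k hk
      rw [Finset.mem_range] at hk
      have h1 : n + 1 - 1 - k = n - k := by omega
      have h2 : n - (n - k) = k := by omega
      have h3 : n - m ≤ n - k := by omega
      have h4 : n - k - (n - m) = m - k := by omega
      have h5 : n - k = (n - m) + (m - k) := by omega
      rw [h1, h2, hcoeff, if_pos h3, h4, Polynomial.coeff_X_add_one_pow,
        Nat.choose_symm (by omega : k ≤ m), h5, pow_add, C_mul, C_mul, C_mul]
      ring
    rw [Finset.sum_congr rfl key, ← Finset.mul_sum, lem0']
  · intro k hk hk'
    rw [Finset.mem_range] at hk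
    rw [Finset.mem_range, not_lt] at hk'
    have h1 : n + 1 - 1 - k = n - k := by omega
    rw [h1, hcoeff, if_neg (by omega)]
    simp

private lemma lemA2 (n k j : ℕ) (hj : j ≤ n) :
    ∑ l ∈ Finset.range (n + 1),
      ((-1 : ℚ) ^ l * ((n - l).choose k : ℚ)) * ((-1 : ℚ) ^ j * ((n - j).choose l : ℚ))
      = (-1 : ℚ) ^ j * (((X + 1 : ℚ[X]) ^ j * X ^ (n - j)).coeff k) := by
  have hsum : ∑ l ∈ Finset.range (n + 1),
      ((-1 : ℚ) ^ l * ((n - j).choose l : ℚ)) * ((n - l).choose k : ℚ)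
      = (((X + 1 : ℚ[X]) ^ j * X ^ (n - j)).coeff k) := by
    have := lem1 n (n - j) (by omega)
    have hcoeff := congrArg (fun p => Polynomial.coeff p k) this
    simp only [Polynomial.finset_sum_coeff, Polynomial.coeff_C_mul,
      Polynomial.coeff_X_add_one_pow] at hcoeff
    rw [hcoeff]
    rw [Nat.sub_sub_self hj, mul_comm]
  rw [← hsum, Finset.mul_sum]
  refine Finset.sum_congr rfl fun l _ => ?_
  ring

private lemma lemA3 (n i j : ℕ) (hj : j ≤ n) :
    ∑ k ∈ Finset.range (n + 1),
      ((-1 : ℚ) ^ k * ((n - k).choose i : ℚ)) *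
        ((-1 : ℚ) ^ j * (((X + 1 : ℚ[X]) ^ j * X ^ (n - j)).coeff k))
      = (-1 : ℚ) ^ n * (if i = j then 1 else 0) := by
  have hsum : ∑ k ∈ Finset.range (n + 1),
      ((-1 : ℚ) ^ k * (((X + 1 : ℚ[X]) ^ j * X ^ (n - j)).coeff k)) *
        ((n - k).choose i : ℚ)
      = (-1 : ℚ) ^ (n - j) * (if i = j then 1 else 0) := by
    have := lem3 n j hj
    have hcoeff := congrArg (fun p => Polynomial.coeff p i) this
    simp only [Polynomial.finset_sum_coeff, Polynomial.coeff_C_mul,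
      Polynomial.coeff_X_add_one_pow, Polynomial.coeff_X_pow] at hcoeff
    rw [hcoeff]
  have hmul : ∑ k ∈ Finset.range (n + 1),
      ((-1 : ℚ) ^ k * ((n - k).choose i : ℚ)) *
        ((-1 : ℚ) ^ j * (((X + 1 : ℚ[X]) ^ j * X ^ (n - j)).coeff k))
      = (-1 : ℚ) ^ j * ∑ k ∈ Finset.range (n + 1),
          ((-1 : ℚ) ^ k * (((X + 1 : ℚ[X]) ^ j * X ^ (n - j)).coeff k)) *
            ((n - k).choose i : ℚ) := by
    rw [Finset.mul_sum]
    refine Finset.sum_congr rfl fun k _ => ?_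
    ring
  rw [hmul, hsum, ← mul_assoc, ← pow_add]
  congr 2
  omega

/-- **`A` is invertible with inverse `(-1)^n · A^2`.**
Let `A` be the `(n+1) × (n+1)` matrix over `ℚ` with entries
`a_{ij} = (-1)^j * C(n-j, i)` (with `C(m,k) = 0` for `k > m`).  Then `A` is invertible,
and its inverse is `(-1)^n • A^2`. -/
theorem matrixA_inv (n : ℕ)
    (A : Matrix (Fin (n + 1)) (Fin (n + 1)) ℚ)
    (hA : ∀ i j : Fin (n + 1), A i j = (-1 : ℚ) ^ (j : ℕ) * ((n - (j : ℕ)).choose (i : ℕ))) :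
    IsUnit A ∧
      A * (((-1 : ℚ) ^ n) • A ^ 2) = 1 ∧
      (((-1 : ℚ) ^ n) • A ^ 2) * A = 1 ∧
      A⁻¹ = ((-1 : ℚ) ^ n) • A ^ 2 := by
  have hA2 : ∀ k j : Fin (n + 1), (A * A) k j
      = (-1 : ℚ) ^ (j : ℕ) * (((X + 1 : ℚ[X]) ^ (j : ℕ) * X ^ (n - (j : ℕ))).coeff (k : ℕ)) := by
    intro k j
    rw [Matrix.mul_apply]
    have : ∀ l : Fin (n + 1), A k l * A l j
        = ((-1 : ℚ) ^ (l : ℕ) * ((n - (l : ℕ)).choose (k : ℕ) : ℚ)) *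
            ((-1 : ℚ) ^ (j : ℕ) * ((n - (j : ℕ)).choose (l : ℕ) : ℚ)) := by
      intro l; rw [hA, hA]
    rw [Finset.sum_congr rfl fun l _ => this l]
    rw [Fin.sum_univ_eq_sum_range (fun l =>
      ((-1 : ℚ) ^ l * ((n - l).choose (k : ℕ) : ℚ)) *
        ((-1 : ℚ) ^ (j : ℕ) * ((n - (j : ℕ)).choose l : ℚ)))]
    exact lemA2 n k j j.is_le
  have hA3 : A * (A * A) = ((-1 : ℚ) ^ n) • (1 : Matrix (Fin (n + 1)) (Fin (n + 1)) ℚ) := by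
    ext i j
    rw [Matrix.mul_apply]
    have : ∀ k : Fin (n + 1), A i k * (A * A) k j
        = ((-1 : ℚ) ^ (k : ℕ) * ((n - (k : ℕ)).choose (i : ℕ) : ℚ)) *
            ((-1 : ℚ) ^ (j : ℕ) *
              (((X + 1 : ℚ[X]) ^ (j : ℕ) * X ^ (n - (j : ℕ))).coeff (k : ℕ))) := by
      intro k; rw [hA, hA2]
    rw [Finset.sum_congr rfl fun k _ => this k]
    have hconv : ∑ k : Fin (n + 1),
        ((-1 : ℚ) ^ (k : ℕ) * ((n - (k : ℕ)).choose (i : ℕ) : ℚ)) *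
          ((-1 : ℚ) ^ (j : ℕ) *
            (((X + 1 : ℚ[X]) ^ (j : ℕ) * X ^ (n - (j : ℕ))).coeff (k : ℕ)))
        = ∑ k ∈ Finset.range (n + 1),
        ((-1 : ℚ) ^ k * ((n - k).choose (i : ℕ) : ℚ)) *
          ((-1 : ℚ) ^ (j : ℕ) *
            (((X + 1 : ℚ[X]) ^ (j : ℕ) * X ^ (n - (j : ℕ))).coeff k)) :=
      Fin.sum_univ_eq_sum_range (fun k =>
        ((-1 : ℚ) ^ k * ((n - k).choose (i : ℕ) : ℚ)) *
          ((-1 : ℚ) ^ (j : ℕ) *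
            (((X + 1 : ℚ[X]) ^ (j : ℕ) * X ^ (n - (j : ℕ))).coeff k))) (n + 1)
    rw [hconv, lemA3 n i j j.is_le]
    simp [Matrix.one_apply, Matrix.smul_apply, Fin.ext_iff]
  have h1 : A * (((-1 : ℚ) ^ n) • A ^ 2) = 1 := by
    rw [pow_two, mul_smul_comm, hA3, smul_smul, ← mul_pow]
    norm_num
  have h2 : (((-1 : ℚ) ^ n) • A ^ 2) * A = 1 := by
    rw [pow_two, smul_mul_assoc, mul_assoc, hA3, smul_smul, ← mul_pow]
    norm_num
  exact ⟨⟨⟨A, ((-1 : ℚ) ^ n) • A ^ 2, h1, h2⟩, rfl⟩, h1, h2, Matrix.inv_eq_right_inv h1⟩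
end

section
/- Let E be a finite-dimensional vector space over a field k and let E_1, ..., E_r ⊆ E be subspaces with codim E_i = e_i. Suppose that for every proper subset J of I = {1,...,r} the codimension of E_J = ∩_{i∈J} E_i equals ∑_{i∈J} e_i, and suppose |I| ≥ 2 and codim E_I < ∑_{i∈I} e_i. Then the subspaces E_{I\{i}}, as i ranges over I, do not span E. -/
open Module

/-- **Non-spanning when the full intersection has too small codimension.**
Let `E` be a finite-dimensional vector space over a field `k`, and `E_1, ..., E_r ⊆ E`
subspaces with `codim E_i = e_i` (codimension meaning `finrank` of the quotient).
Suppose for every proper subset `J ⊊ I = {1,...,r}` that the codimension of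
`E_J = ⋂_{i ∈ J} E_i` equals `∑_{i ∈ J} e_i`, that `|I| ≥ 2`, and that
`codim E_I < ∑_{i ∈ I} e_i`.  Then the subspaces `E_{I \ {i}}`, as `i` ranges over `I`,
do not span `E`. -/
theorem not_span_of_small_codim (k : Type*) [Field k]
    (E : Type*) [AddCommGroup E] [Module k E] [FiniteDimensional k E]
    (r : ℕ) (hr : 2 ≤ r)
    (Esub : Fin r → Submodule k E) (e : Fin r → ℕ)
    (hcodim : ∀ i, Module.finrank k (E ⧸ Esub i) = e i)
    (hproper : ∀ J : Finset (Fin r), J ≠ Finset.univ →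
      Module.finrank k (E ⧸ (⨅ i ∈ J, Esub i)) = ∑ i ∈ J, e i)
    (hfull : Module.finrank k (E ⧸ (⨅ i : Fin r, Esub i)) < ∑ i : Fin r, e i) :
    (⨆ i : Fin r, ⨅ j ∈ Finset.univ.erase i, Esub j) ≠ ⊤ := by
  set F : Fin r → Submodule k E := fun i => ⨅ j ∈ Finset.univ.erase i, Esub j with hF
  set EI : Submodule k E := ⨅ i : Fin r, Esub i with hEI
  set n : ℕ := Module.finrank k E with hn
  set S : ℕ := ∑ i : Fin r, e i with hS
  set d : ℕ := Module.finrank k EI with hd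
  -- codim of EI
  have hcd : Module.finrank k (E ⧸ EI) + d = n :=
    Submodule.finrank_quotient_add_finrank EI
  have hdS : n < d + S := by
    have := hfull
    omega
  -- EI ≤ F i
  have hEIF : ∀ i, EI ≤ F i := by
    intro i
    apply le_iInf; intro j; apply le_iInf; intro _
    exact iInf_le _ j
  -- finrank of F i
  have hFi : ∀ i : Fin r, Module.finrank k (F i) + S = n + e i := by
    intro i
    have h1 : Module.finrank k (E ⧸ F i) = ∑ j ∈ Finset.univ.erase i, e j := by
      apply hproper
      intro hcontra
      have hni : i ∉ Finset.univ.erase i := Finset.notMem_erase i _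
      rw [hcontra] at hni
      exact hni (Finset.mem_univ i)
    have h2 : Module.finrank k (E ⧸ F i) + Module.finrank k (F i) = n :=
      Submodule.finrank_quotient_add_finrank (F i)
    have h3 := Finset.add_sum_erase Finset.univ e (Finset.mem_univ i)
    omega
  -- key induction
  have key : ∀ T : Finset (Fin r),
      Module.finrank k ↥(⨆ i ∈ T, F i) + T.card * d
        ≤ d + ∑ i ∈ T, Module.finrank k (F i) := by
    intro T
    induction T using Finset.induction_on with
    | empty =>
      have hb : (⨆ i ∈ (∅ : Finset (Fin r)), F i) = ⊥ := by simp
      rw [hb, finrank_bot]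
      simp
    | @insert a s ha ih =>
      rw [Finset.iSup_insert, Finset.sum_insert ha, Finset.card_insert_of_notMem ha]
      rcases s.eq_empty_or_nonempty with rfl | hs
      · have hb : (⨆ i ∈ (∅ : Finset (Fin r)), F i) = ⊥ := by simp
        rw [hb, sup_bot_eq]
        simp
        omega
      · set P : Submodule k E := ⨆ i ∈ s, F i with hP
        have hsup : Module.finrank k ↥(F a ⊔ P) + Module.finrank k ↥(F a ⊓ P)
            = Module.finrank k (F a) + Module.finrank k P :=
          Submodule.finrank_sup_add_finrank_inf_eq (F a) P
        have hEIP : EI ≤ F a ⊓ P := by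
          refine le_inf (hEIF a) ?_
          obtain ⟨j, hj⟩ := hs
          exact le_trans (hEIF j) (le_iSup₂_of_le j hj le_rfl)
        have hdle : d ≤ Module.finrank k ↥(F a ⊓ P) := Submodule.finrank_mono hEIP
        have hmul : (s.card + 1) * d = s.card * d + d := by ring
        rw [hmul]
        omega
  have keyu := key Finset.univ
  rw [Finset.card_univ, Fintype.card_fin] at keyu
  intro htop
  have hsupeq : (⨆ i ∈ Finset.univ, F i : Submodule k E) = ⊤ := by
    simpa using htop
  rw [hsupeq, finrank_top] at keyu
  -- sum of finranks of F i
  have hsumF : ∑ i : Fin r, Module.finrank k (F i) + r * S = r * n + S := by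
    have : ∑ i : Fin r, (Module.finrank k (F i) + S) = ∑ i : Fin r, (n + e i) := by
      exact Finset.sum_congr rfl fun i _ => hFi i
    simp only [Finset.sum_add_distrib, Finset.sum_const, Finset.card_univ,
      Fintype.card_fin, smul_eq_mul] at this
    omega
  -- derive contradiction
  obtain ⟨u, hu⟩ : ∃ u, d + S = n + 1 + u := ⟨d + S - n - 1, by omega⟩
  have e6 : r * d + r * S = r * n + r + r * u := by
    rw [← Nat.mul_add, hu]; ring
  have e5 : u ≤ r * u := Nat.le_mul_of_pos_left u (by omega)
  omega
end

section
/- Over S = k[x_1,...,x_n], let M be a squarefree module and define its Alexander dual A(M) by A(M)_R = Hom_k(M_{R^c}, k) for R ⊆ [n], with multiplication by x_v (for v ∉ R) given by the dual of multiplication M_{(R∪{v})^c} → M_{R^c} by x_v. Then A(A(M)) is naturally isomorphic to M, i.e., Alexander duality is an involution on squarefree modules. -/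
/-! The pieces of `A(A(M))` are the double duals `Hom(Hom(M_{Rᶜᶜ}, k), k)`, and unwinding the two
dualizations shows that its multiplication maps are the double transposes of those of `M`.
Since the evaluation map `V ≃ V**` of a finite-dimensional space is natural, it intertwines
`f**` with `f`, which gives the isomorphism. -/

/-- A (combinatorial model of a) squarefree module over `S = k[x_1,...,x_n]`:
a squarefree module is determined, up to isomorphism, by its graded pieces `M_R`
for `R ⊆ [n]` (finite-dimensional `k`-vector spaces) together with the
multiplication maps `x_v : M_R → M_{R ∪ {v}}` for `v ∉ R`. -/
structure SqFreeData (k : Type) [Field k] (n : ℕ) where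
  /-- the graded piece `M_R` -/
  piece : Finset (Fin n) → Type
  [addCommGroup : ∀ R, AddCommGroup (piece R)]
  [module : ∀ R, Module k (piece R)]
  [finiteDimensional : ∀ R, FiniteDimensional k (piece R)]
  /-- multiplication by `x_v : M_R → M_{R ∪ {v}}` for `v ∉ R` -/
  mul : ∀ (R : Finset (Fin n)) (v : Fin n), v ∉ R → (piece R →ₗ[k] piece (insert v R))

attribute [instance] SqFreeData.addCommGroup SqFreeData.module SqFreeData.finiteDimensional

/-- Transport of a graded piece along an equality of index sets. -/
def SqFreeData.castEquiv {k : Type} [Field k] {n : ℕ} (M : SqFreeData k n)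
    {R S : Finset (Fin n)} (h : R = S) : M.piece R ≃ₗ[k] M.piece S :=
  h ▸ LinearEquiv.refl k (M.piece R)

/-- **The Alexander dual** `A(M)`: its piece at `R` is `Hom_k(M_{Rᶜ}, k)`, and for
`v ∉ R` the multiplication `A(M)_R → A(M)_{R ∪ {v}}` is the dual of the
multiplication `M_{(R ∪ {v})ᶜ} → M_{Rᶜ}` by `x_v` (note `Rᶜ = (R ∪ {v})ᶜ ∪ {v}`). -/
noncomputable def SqFreeData.alexanderDual {k : Type} [Field k] {n : ℕ}
    (M : SqFreeData k n) : SqFreeData k n where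
  piece R := Module.Dual k (M.piece Rᶜ)
  addCommGroup R := inferInstance
  module R := inferInstance
  finiteDimensional R := inferInstance
  mul R v hv :=
    (((M.castEquiv (show insert v ((insert v R)ᶜ) = Rᶜ by
          ext w; by_cases hw : w = v <;> simp [hw, hv])).toLinearMap.comp
        (M.mul ((insert v R)ᶜ) v (by simp))) :
          M.piece ((insert v R)ᶜ) →ₗ[k] M.piece Rᶜ).dualMap

namespace SqFreeData

variable {k : Type} [Field k] {n : ℕ} (M : SqFreeData k n)

@[simp]
lemma castEquiv_castEquiv_apply {R S T : Finset (Fin n)} (h : R = S) (h' : S = T)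
    (x : M.piece R) : M.castEquiv h' (M.castEquiv h x) = M.castEquiv (h.trans h') x := by
  subst h h'; rfl

lemma mul_castEquiv_apply {R S : Finset (Fin n)} (h : R = S) {v : Fin n}
    (hv : v ∉ R) (hv' : v ∉ S) (x : M.piece R) :
    M.mul S v hv' (M.castEquiv h x) = M.castEquiv (congrArg (insert v) h) (M.mul R v hv x) := by
  subst h; rfl

lemma alexanderDual_castEquiv {R S : Finset (Fin n)} (h : R = S) :
    (M.alexanderDual.castEquiv h).toLinearMap =
      (M.castEquiv (congrArg compl h).symm).toLinearMap.dualMap := by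
  subst h; rfl

lemma alexanderDual_alexanderDual_mul (R : Finset (Fin n)) (v : Fin n) (hv : v ∉ R) :
    M.alexanderDual.alexanderDual.mul R v hv =
      ((M.castEquiv (show insert v Rᶜᶜ = (insert v R)ᶜᶜ by simp)).toLinearMap ∘ₗ
        M.mul Rᶜᶜ v (by simpa using hv)).dualMap.dualMap := by
  change ((M.alexanderDual.castEquiv _).toLinearMap ∘ₗ
    ((M.castEquiv _).toLinearMap ∘ₗ M.mul _ v _).dualMap).dualMap = _
  rw [alexanderDual_castEquiv]
  change (((M.castEquiv _).toLinearMap ∘ₗ M.mul _ v _) ∘ₗ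
    (M.castEquiv _).toLinearMap).dualMap.dualMap = _
  congr 2
  ext x
  simp only [LinearMap.coe_comp, LinearEquiv.coe_coe, Function.comp_apply]
  rw [M.mul_castEquiv_apply (R := Rᶜᶜ) _ (by simpa using hv), castEquiv_castEquiv_apply]

end SqFreeData

/-- **Alexander duality is an involution on squarefree modules**: `A(A(M))` is
naturally isomorphic to `M`, via isomorphisms of the graded pieces commuting with the
multiplication maps by the variables. -/
theorem alexanderDual_involutive (k : Type) [Field k] (n : ℕ) (M : SqFreeData k n) :
    ∃ e : ∀ R : Finset (Fin n), (M.alexanderDual.alexanderDual.piece R) ≃ₗ[k] M.piece R,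
      ∀ (R : Finset (Fin n)) (v : Fin n) (hv : v ∉ R),
        (e (insert v R)).toLinearMap.comp (M.alexanderDual.alexanderDual.mul R v hv) =
          (M.mul R v hv).comp (e R).toLinearMap := by
  refine ⟨fun R => (Module.evalEquiv k (M.piece Rᶜᶜ)).symm ≪≫ₗ M.castEquiv (compl_compl R),
    fun R v hv => ?_⟩
  rw [M.alexanderDual_alexanderDual_mul]
  ext Φ
  obtain ⟨x, rfl⟩ := (Module.evalEquiv k (M.piece Rᶜᶜ)).surjective Φ
  -- `f.dualMap.dualMap (eval x) = eval (f x)` holds definitionally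
  change M.castEquiv _ ((Module.evalEquiv k _).symm (Module.evalEquiv k _
      (M.castEquiv _ (M.mul Rᶜᶜ v _ x)))) =
    M.mul R v hv (M.castEquiv _ ((Module.evalEquiv k _).symm (Module.evalEquiv k _ x)))
  rw [LinearEquiv.symm_apply_apply, LinearEquiv.symm_apply_apply,
    M.mul_castEquiv_apply (compl_compl R) (by simpa using hv) hv, M.castEquiv_castEquiv_apply]
end
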